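/- Let α ∈ [0,1], ρ > 0, and let a₀(n), a₁(n) be real sequences with (a₀(n)) bounded and 2a₀(n)+a₁(n) = 1 for all n. Then there exists a constant C₃ > 0 (independent of n and of f) such that for every 0 < τ ≤ 1, every L > 0 and every function f : [0,1] → ℝ satisfying the Lipschitz condition |f(x₁) − f(x₂)| ≤ L|x₁−x₂|^τ for all x₁, x₂ ∈ [0,1], one has, for every n ≥ 2 and every x ∈ [0,1], |J_{n,α,ρ}^{M,1}(f;x) − f(x)| ≤ L·C₃·(1 + 3|a₀(n)|)·n^{−τ/2}. -/

import Mathlib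

open MeasureTheory Finset Filter

noncomputable def bin (m : ℕ) (j : ℤ) : ℝ :=
  if 0 ≤ j ∧ j ≤ (m : ℤ) then (m.choose j.toNat : ℝ) else 0

/-- The α-Bernstein basis polynomial `p_{n,k}^α(x)` (with `k : ℤ`, vanishing out of range). -/
noncomputable def bp (α : ℝ) (n : ℕ) (k : ℤ) (x : ℝ) : ℝ :=
  if n = 1 then (if k = 0 then 1 - x else if k = 1 then x else 0)
  else
    (1 - α) * (bin (n - 2) k * x ^ k.toNat * (1 - x) ^ (n - 1 - k.toNat)
      + bin (n - 2) (k - 2) * x ^ (k.toNat - 1) * (1 - x) ^ (n - k.toNat))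
    + α * bin n k * x ^ k.toNat * (1 - x) ^ (n - k.toNat)

/-- Euler Beta function. -/
noncomputable def betaFn (a b : ℝ) : ℝ := Real.Gamma a * Real.Gamma b / Real.Gamma (a + b)

/-- The Pălțănea kernel `μ_{n,k}^ρ(t)`. -/
noncomputable def pal (ρ : ℝ) (n k : ℕ) (t : ℝ) : ℝ :=
  t ^ ((k : ℝ) * ρ) * (1 - t) ^ (((n : ℝ) - (k : ℝ)) * ρ)
    / betaFn ((k : ℝ) * ρ + 1) (((n : ℝ) - (k : ℝ)) * ρ + 1)

/-- First-order modified α-Bernstein–Pălțănea operator `J_{n,α,ρ}^{M,1}(f;x)`. -/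
noncomputable def J1 (α ρ : ℝ) (a0 a1 : ℕ → ℝ) (n : ℕ) (f : ℝ → ℝ) (x : ℝ) : ℝ :=
  ∑ k ∈ Finset.range (n + 1),
    ((a1 n * x + a0 n) * bp α (n - 1) (k : ℤ) x
      + (a1 n * (1 - x) + a0 n) * bp α (n - 1) ((k : ℤ) - 1) x)
    * ∫ t in (0:ℝ)..1, pal ρ n k t * f t

/-!
The weights of `J1` sum to `a(x,n) + a(1-x,n) = 1` and every kernel `μ_{n,k}^ρ` has mass one, so
`J1 f x - f x = ∑ₖ wₖ ∫ μ_{n,k}^ρ(t) (f t - f x) dt`. With `|t - x|^τ ≤ n^{-τ/2} (1 + n (t - x)²)`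
each integral is controlled by the second moment of `μ_{n,k}^ρ` about `x`, which the recurrence of the
Beta function computes exactly; it is at most `2 (x - k/n)² + O(1/n)`. The weights satisfy
`|wₖ| ≤ (1 + 3|a₀(n)|) (p_{n-1,k} + p_{n-1,k-1})`, and for `m ≥ 2` the basis `p_{m,·}^α` is the mixture
`(1-α) ((1-x) b_{m-2,k} + x b_{m-2,k-2}) + α b_{m,k}` of Bernstein bases, so the variance of the
Bernstein distribution gives `∑ₖ (p_{n-1,k} + p_{n-1,k-1}) (n x - k)² = O(n)`.
-/

open Topology

lemma betaFn_pos {a b : ℝ} (ha : 0 < a) (hb : 0 < b) : 0 < betaFn a b :=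
  ProbabilityTheory.beta_pos ha hb

lemma betaFn_add_one_left {a b : ℝ} (ha : 0 < a) (hb : 0 < b) :
    betaFn (a + 1) b = a / (a + b) * betaFn a b := by
  have hab : Real.Gamma (a + b) ≠ 0 := (Real.Gamma_pos_of_pos (add_pos ha hb)).ne'
  rw [betaFn, betaFn, Real.Gamma_add_one ha.ne', add_right_comm, Real.Gamma_add_one (by positivity)]
  field_simp

lemma integral_rpow_mul_one_sub_rpow {a b : ℝ} (ha : 0 < a) (hb : 0 < b) :
    ∫ t in (0:ℝ)..1, t ^ (a - 1) * (1 - t) ^ (b - 1) = betaFn a b := by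
  have hB := Complex.Gamma_mul_Gamma_eq_betaIntegral (s := (a:ℂ)) (t := (b:ℂ))
    (by simpa using ha) (by simpa using hb)
  have hreal : Complex.betaIntegral a b
      = ((∫ t in (0:ℝ)..1, t ^ (a - 1) * (1 - t) ^ (b - 1) : ℝ) : ℂ) := by
    rw [Complex.betaIntegral, ← intervalIntegral.integral_ofReal]
    refine intervalIntegral.integral_congr fun t ht => ?_
    rw [Set.uIcc_of_le zero_le_one] at ht
    simp only [Complex.ofReal_mul, Complex.ofReal_cpow ht.1,
      Complex.ofReal_cpow (sub_nonneg.mpr ht.2), Complex.ofReal_sub, Complex.ofReal_one]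
  rw [hreal, ← Complex.ofReal_add, Complex.Gamma_ofReal, Complex.Gamma_ofReal,
    Complex.Gamma_ofReal, ← Complex.ofReal_mul, ← Complex.ofReal_mul] at hB
  have hab : Real.Gamma (a + b) ≠ 0 := (Real.Gamma_pos_of_pos (add_pos ha hb)).ne'
  rw [betaFn, eq_div_iff hab, mul_comm]
  exact_mod_cast hB.symm

lemma continuousOn_of_abs_sub_le_rpow {f : ℝ → ℝ} {s : Set ℝ} {L τ : ℝ} (hτ : 0 < τ)
    (hf : ∀ x1 ∈ s, ∀ x2 ∈ s, |f x1 - f x2| ≤ L * |x1 - x2| ^ τ) : ContinuousOn f s := by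
  intro x hx
  have hlim : Tendsto (fun y => L * |y - x| ^ τ) (𝓝[s] x) (𝓝 0) := by
    have hcont : Continuous fun y => L * |y - x| ^ τ :=
      continuous_const.mul ((continuous_id.sub continuous_const).abs.rpow_const fun _ => Or.inr hτ.le)
    simpa [Real.zero_rpow hτ.ne'] using (hcont.tendsto x).mono_left nhdsWithin_le_nhds
  rw [ContinuousWithinAt, tendsto_iff_dist_tendsto_zero]
  refine squeeze_zero' (Eventually.of_forall fun _ => dist_nonneg) ?_ hlim
  filter_upwards [self_mem_nhdsWithin] with y hy
  exact (Real.dist_eq _ _).trans_le (hf y hy x hx)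

lemma rpow_le_one_add_sq {r τ : ℝ} (hr : 0 ≤ r) (hτ : 0 ≤ τ) (hτ1 : τ ≤ 1) : r ^ τ ≤ 1 + r ^ 2 := by
  rcases le_or_gt r 1 with h | h
  · nlinarith [Real.rpow_le_one hr h hτ, sq_nonneg r]
  · calc r ^ τ ≤ r ^ (1:ℝ) := Real.rpow_le_rpow_of_exponent_le h.le hτ1
      _ ≤ 1 + r ^ 2 := by rw [Real.rpow_one]; nlinarith

lemma abs_rpow_le_rpow_neg_half_mul {N τ : ℝ} (hN : 0 < N) (hτ : 0 ≤ τ) (hτ1 : τ ≤ 1) (y : ℝ) :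
    |y| ^ τ ≤ N ^ (-(τ / 2)) * (1 + N * y ^ 2) := by
  have hsqrt : 0 ≤ √N * |y| := by positivity
  have hy : |y| = N ^ (-(1 / 2) : ℝ) * (√N * |y|) := by
    rw [← mul_assoc, Real.sqrt_eq_rpow, ← Real.rpow_add hN]
    norm_num
  calc |y| ^ τ = (N ^ (-(1 / 2) : ℝ) * (√N * |y|)) ^ τ := congrArg (· ^ τ) hy
    _ = N ^ (-(τ / 2)) * (√N * |y|) ^ τ := by
        rw [Real.mul_rpow (by positivity) hsqrt, ← Real.rpow_mul hN.le]
        ring_nf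
    _ ≤ N ^ (-(τ / 2)) * (1 + (√N * |y|) ^ 2) := by
        gcongr
        exact rpow_le_one_add_sq hsqrt hτ hτ1
    _ = N ^ (-(τ / 2)) * (1 + N * y ^ 2) := by
        rw [mul_pow, Real.sq_sqrt hN.le, sq_abs]

lemma abs_sum_mul_le {ι : Type*} {s : Finset ι} {w D g h : ι → ℝ} {B E a : ℝ}
    (hw : ∀ i ∈ s, |w i| ≤ B * g i) (hD : ∀ i ∈ s, |D i| ≤ E * (a + h i)) :
    |∑ i ∈ s, w i * D i| ≤ B * E * (a * ∑ i ∈ s, g i + ∑ i ∈ s, g i * h i) := by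
  calc |∑ i ∈ s, w i * D i| ≤ ∑ i ∈ s, |w i * D i| := abs_sum_le_sum_abs _ _
    _ ≤ ∑ i ∈ s, B * g i * (E * (a + h i)) := by
        refine sum_le_sum fun i hi => ?_
        rw [abs_mul]
        exact mul_le_mul (hw i hi) (hD i hi) (abs_nonneg _) ((abs_nonneg _).trans (hw i hi))
    _ = B * E * (a * ∑ i ∈ s, g i + ∑ i ∈ s, g i * h i) := by
        rw [mul_sum, ← sum_add_distrib, mul_sum]
        exact sum_congr rfl fun _ _ => by ring

section Kernel

variable {ρ : ℝ} {n k : ℕ}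

lemma pal_nonneg (hρ : 0 < ρ) (hk : k ≤ n) {t : ℝ} (ht : t ∈ Set.Icc (0:ℝ) 1) :
    0 ≤ pal ρ n k t := by
  have hnk : (0:ℝ) ≤ n - k := sub_nonneg.mpr (by exact_mod_cast hk)
  exact div_nonneg (mul_nonneg (Real.rpow_nonneg ht.1 _) (Real.rpow_nonneg (sub_nonneg.mpr ht.2) _))
    (betaFn_pos (by positivity) (by positivity)).le

lemma continuousOn_pal (hρ : 0 < ρ) (hk : k ≤ n) : ContinuousOn (pal ρ n k) (Set.Icc 0 1) := by
  have hnk : (0:ℝ) ≤ n - k := sub_nonneg.mpr (by exact_mod_cast hk)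
  have h1 : 0 ≤ (k:ℝ) * ρ := by positivity
  have h2 : 0 ≤ ((n:ℝ) - k) * ρ := by positivity
  unfold pal
  fun_prop (disch := assumption)

lemma intervalIntegrable_pal_mul (hρ : 0 < ρ) (hk : k ≤ n) {g : ℝ → ℝ}
    (hg : ContinuousOn g (Set.Icc 0 1)) :
    IntervalIntegrable (fun t => pal ρ n k t * g t) volume 0 1 :=
  ((continuousOn_pal hρ hk).mul hg).intervalIntegrable_of_Icc zero_le_one

lemma intervalIntegrable_pal (hρ : 0 < ρ) (hk : k ≤ n) :
    IntervalIntegrable (pal ρ n k) volume 0 1 :=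
  (continuousOn_pal hρ hk).intervalIntegrable_of_Icc zero_le_one

lemma integral_pal_mul_pow (hρ : 0 < ρ) (hk : k ≤ n) (j : ℕ) :
    ∫ t in (0:ℝ)..1, pal ρ n k t * t ^ j
      = betaFn (k * ρ + 1 + j) ((n - k) * ρ + 1) / betaFn (k * ρ + 1) ((n - k) * ρ + 1) := by
  have hnk : (0:ℝ) ≤ n - k := sub_nonneg.mpr (by exact_mod_cast hk)
  have hpow : ∀ t ∈ Set.uIcc (0:ℝ) 1, pal ρ n k t * t ^ j
      = t ^ ((k * ρ + 1 + j) - 1) * (1 - t) ^ (((n - k) * ρ + 1) - 1)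
        / betaFn (k * ρ + 1) ((n - k) * ρ + 1) := by
    intro t ht
    rw [Set.uIcc_of_le zero_le_one] at ht
    rw [pal, add_sub_cancel_right, add_right_comm, add_sub_cancel_right]
    obtain rfl | hj := j.eq_zero_or_pos
    · simp
    · have hj' : (0:ℝ) < j := by exact_mod_cast hj
      rw [Real.rpow_add_natCast' ht.1 (by positivity)]
      ring
  rw [intervalIntegral.integral_congr hpow, intervalIntegral.integral_div,
    integral_rpow_mul_one_sub_rpow (by positivity) (by positivity)]

lemma integral_pal (hρ : 0 < ρ) (hk : k ≤ n) : ∫ t in (0:ℝ)..1, pal ρ n k t = 1 := by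
  have hnk : (0:ℝ) ≤ n - k := sub_nonneg.mpr (by exact_mod_cast hk)
  have h := integral_pal_mul_pow hρ hk 0
  simp only [pow_zero, mul_one, Nat.cast_zero, add_zero] at h
  rw [h, div_self (betaFn_pos (by positivity) (by positivity)).ne']

lemma integral_pal_mul_self (hρ : 0 < ρ) (hk : k ≤ n) :
    ∫ t in (0:ℝ)..1, pal ρ n k t * t = (k * ρ + 1) / (n * ρ + 2) := by
  have hnk : (0:ℝ) ≤ n - k := sub_nonneg.mpr (by exact_mod_cast hk)
  have ha : (0:ℝ) < k * ρ + 1 := by positivity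
  have hb : (0:ℝ) < (n - k) * ρ + 1 := by positivity
  have h := integral_pal_mul_pow hρ hk 1
  simp only [pow_one, Nat.cast_one] at h
  rw [h, betaFn_add_one_left ha hb, mul_div_assoc, div_self (betaFn_pos ha hb).ne', mul_one]
  ring_nf

lemma integral_pal_mul_sq (hρ : 0 < ρ) (hk : k ≤ n) :
    ∫ t in (0:ℝ)..1, pal ρ n k t * t ^ 2
      = (k * ρ + 1) * (k * ρ + 2) / ((n * ρ + 2) * (n * ρ + 3)) := by
  have hnk : (0:ℝ) ≤ n - k := sub_nonneg.mpr (by exact_mod_cast hk)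
  have ha : (0:ℝ) < k * ρ + 1 := by positivity
  have hb : (0:ℝ) < (n - k) * ρ + 1 := by positivity
  rw [integral_pal_mul_pow hρ hk 2, Nat.cast_ofNat, show (k:ℝ) * ρ + 1 + 2 = k * ρ + 1 + 1 + 1 by ring,
    betaFn_add_one_left (by positivity) hb, betaFn_add_one_left ha hb]
  have e1 : k * ρ + 1 + (((n:ℝ) - k) * ρ + 1) = n * ρ + 2 := by ring
  have e2 : k * ρ + 1 + 1 + (((n:ℝ) - k) * ρ + 1) = n * ρ + 3 := by ring
  rw [e1, e2, mul_div_assoc, mul_div_assoc, div_self (betaFn_pos ha hb).ne', mul_one]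
  field_simp
  ring

lemma integral_pal_mul_sub_sq (hρ : 0 < ρ) (hk : k ≤ n) (x : ℝ) :
    ∫ t in (0:ℝ)..1, pal ρ n k t * (t - x) ^ 2
      = (x - (k * ρ + 1) / (n * ρ + 2)) ^ 2
        + (k * ρ + 1) * ((n - k) * ρ + 1) / ((n * ρ + 2) ^ 2 * (n * ρ + 3)) := by
  have hpal := intervalIntegrable_pal hρ hk
  have hid : IntervalIntegrable (fun t => pal ρ n k t * t) volume 0 1 :=
    intervalIntegrable_pal_mul hρ hk continuousOn_id
  have hsq : IntervalIntegrable (fun t => pal ρ n k t * t ^ 2) volume 0 1 :=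
    intervalIntegrable_pal_mul hρ hk (by fun_prop)
  have hexpand : ∫ t in (0:ℝ)..1, pal ρ n k t * (t - x) ^ 2
      = (∫ t in (0:ℝ)..1, pal ρ n k t * t ^ 2) - 2 * x * (∫ t in (0:ℝ)..1, pal ρ n k t * t)
        + x ^ 2 * ∫ t in (0:ℝ)..1, pal ρ n k t := by
    rw [← intervalIntegral.integral_const_mul, ← intervalIntegral.integral_const_mul,
      ← intervalIntegral.integral_sub hsq (hid.const_mul _),
      ← intervalIntegral.integral_add (hsq.sub (hid.const_mul _)) (hpal.const_mul _)]
    exact intervalIntegral.integral_congr fun t _ => by ring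
  rw [hexpand, integral_pal_mul_sq hρ hk, integral_pal_mul_self hρ hk, integral_pal hρ hk]
  field_simp
  ring

lemma integral_pal_mul_sub_sq_le (hρ : 0 < ρ) (hk : k ≤ n) (hn : 0 < n) (x : ℝ) :
    ∫ t in (0:ℝ)..1, pal ρ n k t * (t - x) ^ 2
      ≤ 2 * (x - k / n) ^ 2 + (2 / ρ ^ 2 + 1 / ρ) / n := by
  have hK : (k:ℝ) ≤ n := by exact_mod_cast hk
  have hN : (1:ℝ) ≤ n := by exact_mod_cast hn
  have hK0 : (0:ℝ) ≤ k := k.cast_nonneg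
  rw [integral_pal_mul_sub_sq hρ hk]
  have hmean : ((k * ρ + 1) / (n * ρ + 2) - k / n) ^ 2 ≤ 1 / (ρ ^ 2 * n) := by
    have e : ((k * ρ + 1) / (n * ρ + 2) - k / n) ^ 2 = (n - 2 * k) ^ 2 / (n ^ 2 * (n * ρ + 2) ^ 2) := by
      field_simp
      ring
    rw [e, div_le_div_iff₀ (by positivity) (by positivity)]
    have h1 : ((n:ℝ) - 2 * k) ^ 2 ≤ n ^ 2 := by nlinarith
    have h2 : ρ ^ 2 * n ≤ (n * ρ + 2) ^ 2 := by nlinarith [sq_nonneg (n * ρ), mul_pos hρ hρ]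
    calc ((n:ℝ) - 2 * k) ^ 2 * (ρ ^ 2 * n) ≤ n ^ 2 * (n * ρ + 2) ^ 2 :=
          mul_le_mul h1 h2 (by positivity) (by positivity)
      _ = 1 * (n ^ 2 * (n * ρ + 2) ^ 2) := by ring
  have hvar : (k * ρ + 1) * ((n - k) * ρ + 1) / ((n * ρ + 2) ^ 2 * (n * ρ + 3)) ≤ 1 / (ρ * n) := by
    rw [div_le_div_iff₀ (by positivity) (by positivity)]
    have h1 : (k * ρ + 1) * ((n - k) * ρ + 1) ≤ (n * ρ + 2) ^ 2 / 4 := by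
      nlinarith [sq_nonneg ((k * ρ + 1) - ((n - k) * ρ + 1))]
    have h2 : ρ * n ≤ n * ρ + 3 := by linarith
    have h3 : 0 ≤ ((n:ℝ) * ρ + 2) ^ 2 * (n * ρ + 3) := by positivity
    nlinarith [mul_le_mul h1 h2 (by positivity) (by positivity)]
  have hsplit : (x - (k * ρ + 1) / (n * ρ + 2)) ^ 2
      ≤ 2 * (x - k / n) ^ 2 + 2 * ((k * ρ + 1) / (n * ρ + 2) - k / n) ^ 2 := by
    nlinarith [sq_nonneg (x - k / n + ((k * ρ + 1) / (n * ρ + 2) - k / n))]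
  have e : (2 / ρ ^ 2 + 1 / ρ) / n = 2 * (1 / (ρ ^ 2 * n)) + 1 / (ρ * n) := by
    field_simp
  rw [e]
  linarith

lemma abs_integral_pal_mul_sub_le (hρ : 0 < ρ) (hk : k ≤ n) (hn : 0 < n) {f : ℝ → ℝ} {L τ : ℝ}
    (hL : 0 ≤ L) (hτ : 0 < τ) (hτ1 : τ ≤ 1)
    (hf : ∀ x1 ∈ Set.Icc (0:ℝ) 1, ∀ x2 ∈ Set.Icc (0:ℝ) 1, |f x1 - f x2| ≤ L * |x1 - x2| ^ τ)
    {x : ℝ} (hx : x ∈ Set.Icc (0:ℝ) 1) :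
    |∫ t in (0:ℝ)..1, pal ρ n k t * (f t - f x)|
      ≤ L * (n : ℝ) ^ (-(τ / 2)) * ((1 + (2 / ρ ^ 2 + 1 / ρ)) + 2 / n * (n * x - k) ^ 2) := by
  have hN : (0:ℝ) < n := by exact_mod_cast hn
  set c := (n : ℝ) ^ (-(τ / 2))
  have hfc := continuousOn_of_abs_sub_le_rpow hτ hf
  have hpal := intervalIntegrable_pal hρ hk
  have hsq : IntervalIntegrable (fun t => pal ρ n k t * (t - x) ^ 2) volume 0 1 :=
    intervalIntegrable_pal_mul hρ hk (by fun_prop)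
  calc |∫ t in (0:ℝ)..1, pal ρ n k t * (f t - f x)|
      ≤ ∫ t in (0:ℝ)..1, |pal ρ n k t * (f t - f x)| :=
        intervalIntegral.abs_integral_le_integral_abs zero_le_one
    _ ≤ ∫ t in (0:ℝ)..1, L * c * pal ρ n k t + L * c * n * (pal ρ n k t * (t - x) ^ 2) := by
        refine intervalIntegral.integral_mono_on zero_le_one
          (intervalIntegrable_pal_mul hρ hk (hfc.sub continuousOn_const)).abs
          ((hpal.const_mul _).add (hsq.const_mul _)) fun t ht => ?_
        rw [abs_mul, abs_of_nonneg (pal_nonneg hρ hk ht)]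
        calc pal ρ n k t * |f t - f x| ≤ pal ρ n k t * (L * (c * (1 + n * (t - x) ^ 2))) := by
              gcongr
              · exact pal_nonneg hρ hk ht
              · exact (hf t ht x hx).trans
                  (mul_le_mul_of_nonneg_left (abs_rpow_le_rpow_neg_half_mul hN hτ.le hτ1 _) hL)
          _ = _ := by ring
    _ = L * c * (1 + n * ∫ t in (0:ℝ)..1, pal ρ n k t * (t - x) ^ 2) := by
        rw [intervalIntegral.integral_add (hpal.const_mul _) (hsq.const_mul _),
          intervalIntegral.integral_const_mul, intervalIntegral.integral_const_mul,
          integral_pal hρ hk]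
        ring
    _ ≤ L * c * (1 + n * (2 * (x - k / n) ^ 2 + (2 / ρ ^ 2 + 1 / ρ) / n)) := by
        gcongr
        exact integral_pal_mul_sub_sq_le hρ hk hn x
    _ = L * c * ((1 + (2 / ρ ^ 2 + 1 / ρ)) + 2 / n * (n * x - k) ^ 2) := by
        field_simp
        ring

end Kernel

section Bernstein

variable {α x : ℝ} {m n : ℕ}

lemma bin_eq_zero {M : ℕ} {j : ℤ} (hj : j < 0 ∨ (M:ℤ) < j) : bin M j = 0 :=
  if_neg (by omega)

lemma bin_natCast_mul_pow (M k : ℕ) :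
    bin M k * x ^ k * (1 - x) ^ (M - k) = (bernsteinPolynomial ℝ M k).eval x := by
  rcases le_or_gt k M with hk | hk
  · simp [bin, hk, bernsteinPolynomial]
  · simp [bin_eq_zero (Or.inr (by exact_mod_cast hk : (M:ℤ) < k)),
      bernsteinPolynomial.eq_zero_of_lt ℝ hk]

lemma sum_range_bernsteinPolynomial_mul {M N : ℕ} (h : M < N) (φ : ℕ → ℝ) :
    ∑ k ∈ range N, (bernsteinPolynomial ℝ M k).eval x * φ k
      = ∑ k ∈ range (M + 1), (bernsteinPolynomial ℝ M k).eval x * φ k := by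
  refine (Finset.sum_subset (range_subset_range.2 h) fun k _ hk => ?_).symm
  rw [bernsteinPolynomial.eq_zero_of_lt ℝ (by simpa using hk), Polynomial.eval_zero, zero_mul]

lemma sum_bernsteinPolynomial_eval (M : ℕ) :
    ∑ k ∈ range (M + 1), (bernsteinPolynomial ℝ M k).eval x = 1 := by
  simpa [Polynomial.eval_finsetSum] using congrArg (Polynomial.eval x) (bernsteinPolynomial.sum ℝ M)

lemma sum_bernsteinPolynomial_eval_mul_sq (M : ℕ) (c : ℝ) :
    ∑ k ∈ range (M + 1), (bernsteinPolynomial ℝ M k).eval x * (c - k) ^ 2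
      = (c - M * x) ^ 2 + M * x * (1 - x) := by
  have h1 : ∑ k ∈ range (M + 1), (bernsteinPolynomial ℝ M k).eval x * (M * x - k) = 0 := by
    have := congrArg (Polynomial.eval x) (bernsteinPolynomial.sum_smul ℝ M)
    simp only [Polynomial.eval_finsetSum, nsmul_eq_mul, Polynomial.eval_mul,
      Polynomial.eval_natCast, Polynomial.eval_X] at this
    simp only [mul_sub, sum_sub_distrib, ← sum_mul, sum_bernsteinPolynomial_eval, one_mul]
    linarith [show ∑ k ∈ range (M + 1), (bernsteinPolynomial ℝ M k).eval x * k
      = ∑ k ∈ range (M + 1), (k:ℝ) * (bernsteinPolynomial ℝ M k).eval x from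
      sum_congr rfl fun _ _ => mul_comm _ _]
  have h2 := congrArg (Polynomial.eval x) (bernsteinPolynomial.variance ℝ M)
  simp only [Polynomial.eval_finsetSum, Polynomial.eval_mul, Polynomial.eval_pow,
    Polynomial.eval_sub, nsmul_eq_mul, Polynomial.eval_X,
    Polynomial.eval_natCast, Polynomial.eval_one] at h2
  calc ∑ k ∈ range (M + 1), (bernsteinPolynomial ℝ M k).eval x * (c - k) ^ 2
      = (c - M * x) ^ 2 * ∑ k ∈ range (M + 1), (bernsteinPolynomial ℝ M k).eval x
        + 2 * (c - M * x) * ∑ k ∈ range (M + 1), (bernsteinPolynomial ℝ M k).eval x * (M * x - k)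
        + ∑ k ∈ range (M + 1), (M * x - k) ^ 2 * (bernsteinPolynomial ℝ M k).eval x := by
        simp only [mul_sum, ← sum_add_distrib]
        exact sum_congr rfl fun _ _ => by ring
    _ = (c - M * x) ^ 2 + M * x * (1 - x) := by
        rw [sum_bernsteinPolynomial_eval, h1, h2]
        ring

lemma sq_sub_mul_add_mul_one_sub_le {M c : ℝ} (hM : 0 ≤ M) (hx : x ∈ Set.Icc (0:ℝ) 1)
    (hc1 : -5 ≤ c - M * x) (hc2 : c - M * x ≤ 5) :
    (c - M * x) ^ 2 + M * x * (1 - x) ≤ 25 + M := by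
  have hxx : x * (1 - x) ≤ 1 := by nlinarith [hx.1, hx.2]
  nlinarith [mul_le_mul_of_nonneg_left hxx hM]

lemma bp_add_two_natCast (M k : ℕ) :
    bp α (M + 2) k x
      = (1 - α) * (bin M k * x ^ k * (1 - x) ^ (M + 1 - k)
          + bin M ((k:ℤ) - 2) * x ^ (k - 1) * (1 - x) ^ (M + 2 - k))
        + α * (bernsteinPolynomial ℝ (M + 2) k).eval x := by
  rw [bp, if_neg (by omega), ← bin_natCast_mul_pow]
  simp only [Nat.add_sub_cancel, Int.toNat_natCast, mul_assoc]
  rfl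

lemma sum_bp_add_two_mul (M : ℕ) (φ : ℕ → ℝ) :
    ∑ k ∈ range (M + 4), bp α (M + 2) k x * φ k
      = (1 - α) * ((1 - x) * ∑ k ∈ range (M + 1), (bernsteinPolynomial ℝ M k).eval x * φ k
          + x * ∑ k ∈ range (M + 1), (bernsteinPolynomial ℝ M k).eval x * φ (k + 2))
        + α * ∑ k ∈ range (M + 3), (bernsteinPolynomial ℝ (M + 2) k).eval x * φ k := by
  have hlow : ∑ k ∈ range (M + 4), bin M k * x ^ k * (1 - x) ^ (M + 1 - k) * φ k
      = (1 - x) * ∑ k ∈ range (M + 1), (bernsteinPolynomial ℝ M k).eval x * φ k := by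
    rw [← sum_range_bernsteinPolynomial_mul (by omega : M < M + 4) φ, mul_sum]
    refine sum_congr rfl fun k _ => ?_
    rw [← bin_natCast_mul_pow]
    rcases le_or_gt k M with hk | hk
    · rw [show M + 1 - k = M - k + 1 by omega, pow_succ]
      ring
    · rw [bin_eq_zero (Or.inr (by exact_mod_cast hk))]
      ring
  have hhigh : ∑ k ∈ range (M + 4), bin M ((k:ℤ) - 2) * x ^ (k - 1) * (1 - x) ^ (M + 2 - k) * φ k
      = x * ∑ k ∈ range (M + 1), (bernsteinPolynomial ℝ M k).eval x * φ (k + 2) := by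
    rw [sum_range_succ', sum_range_succ', ← sum_range_bernsteinPolynomial_mul
      (by omega : M < M + 2) (fun k => φ (k + 2)), mul_sum]
    simp only [bin_eq_zero (Or.inl (by norm_num : (0:ℤ) + 1 - 2 < 0)),
      bin_eq_zero (Or.inl (by norm_num : (0:ℤ) - 2 < 0)), Nat.cast_zero, Nat.cast_add, Nat.cast_one,
      zero_mul, add_zero]
    refine sum_congr rfl fun j _ => ?_
    rw [← bin_natCast_mul_pow, show (j:ℤ) + 1 + 1 - 2 = j by ring,
      show j + 1 + 1 - 1 = j + 1 by omega, show M + 2 - (j + 1 + 1) = M - j by omega, pow_succ]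
    ring
  have htop := sum_range_bernsteinPolynomial_mul (x := x) (by omega : M + 2 < M + 4) φ
  rw [← hlow, ← hhigh, ← htop, ← sum_add_distrib, mul_sum, mul_sum, ← sum_add_distrib]
  exact sum_congr rfl fun k _ => by rw [bp_add_two_natCast]; ring

lemma bp_nonneg (hα : α ∈ Set.Icc (0:ℝ) 1) (hx : x ∈ Set.Icc (0:ℝ) 1) (m : ℕ) (k : ℤ) :
    0 ≤ bp α m k x := by
  have h1x : 0 ≤ 1 - x := sub_nonneg.mpr hx.2
  have h1α : 0 ≤ 1 - α := sub_nonneg.mpr hα.2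
  have hα0 := hα.1
  have hx0 := hx.1
  have hbin : ∀ M j, 0 ≤ bin M j := fun M j => by unfold bin; split_ifs <;> positivity
  unfold bp
  split_ifs
  · exact h1x
  · exact hx0
  · exact le_rfl
  · have := hbin (m - 2) k
    have := hbin (m - 2) (k - 2)
    have := hbin m k
    positivity

lemma bp_eq_zero (hm : 1 ≤ m) {k : ℤ} (hk : k < 0 ∨ (m:ℤ) < k) : bp α m k x = 0 := by
  unfold bp
  split_ifs with h1 h2 h3
  · omega
  · omega
  · rfl
  · rw [bin_eq_zero (by omega), bin_eq_zero (by omega), bin_eq_zero hk]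
    ring

lemma sum_bp (hm : 1 ≤ m) : ∑ k ∈ range (m + 2), bp α m k x = 1 := by
  rcases hm.eq_or_lt with rfl | hm2
  · simp [sum_range_succ, bp]
  obtain ⟨M, rfl⟩ := Nat.exists_eq_add_of_le' hm2
  have h := sum_bp_add_two_mul (α := α) (x := x) M (fun _ => 1)
  simp only [mul_one, sum_bernsteinPolynomial_eval] at h
  rw [show M + 2 + 2 = M + 4 from rfl, h]
  ring

lemma sum_bp_sub_one_mul (hm : 1 ≤ m) (ψ : ℕ → ℝ) :
    ∑ k ∈ range (m + 2), bp α m ((k:ℤ) - 1) x * ψ k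
      = ∑ k ∈ range (m + 2), bp α m k x * ψ (k + 1) := by
  rw [sum_range_succ' _ (m + 1), sum_range_succ _ (m + 1)]
  simp only [Nat.cast_add, Nat.cast_one, add_sub_cancel_right, Nat.cast_zero, zero_sub]
  rw [bp_eq_zero hm (Or.inl (by norm_num)), bp_eq_zero hm (Or.inr (by omega))]
  ring

lemma sum_bp_sub_one (hm : 1 ≤ m) : ∑ k ∈ range (m + 2), bp α m ((k:ℤ) - 1) x = 1 := by
  simpa [sum_bp hm] using sum_bp_sub_one_mul (α := α) (x := x) hm (fun _ => 1)

lemma sum_bp_mul_sq_le (hα : α ∈ Set.Icc (0:ℝ) 1) (hx : x ∈ Set.Icc (0:ℝ) 1) (hm : 1 ≤ m)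
    {c : ℝ} (hc : |c - m * x| ≤ 3) :
    ∑ k ∈ range (m + 2), bp α m k x * (c - k) ^ 2 ≤ 25 * (m + 1) := by
  obtain ⟨hc1, hc2⟩ := abs_le.mp hc
  obtain ⟨hx0, hx1⟩ := hx
  rcases hm.eq_or_lt with rfl | hm2
  · simp only [sum_range_succ, range_zero, sum_empty, bp]
    norm_num at hc1 hc2 ⊢
    nlinarith
  obtain ⟨M, rfl⟩ := Nat.exists_eq_add_of_le' hm2
  have hshift : ∑ k ∈ range (M + 1), (bernsteinPolynomial ℝ M k).eval x * (c - ((k + 2 : ℕ) : ℝ)) ^ 2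
      = ∑ k ∈ range (M + 1), (bernsteinPolynomial ℝ M k).eval x * ((c - 2) - k) ^ 2 :=
    sum_congr rfl fun k _ => by push_cast; ring
  rw [show M + 2 + 2 = M + 4 from rfl, sum_bp_add_two_mul, hshift,
    sum_bernsteinPolynomial_eval_mul_sq, sum_bernsteinPolynomial_eval_mul_sq,
    sum_bernsteinPolynomial_eval_mul_sq]
  push_cast at hc1 hc2 ⊢
  have hM : (0:ℝ) ≤ M := M.cast_nonneg
  set K : ℝ := 25 + (M + 2) with hK
  have hV1 : (c - M * x) ^ 2 + M * x * (1 - x) ≤ K :=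
    (sq_sub_mul_add_mul_one_sub_le hM ⟨hx0, hx1⟩ (by linarith) (by linarith)).trans (by linarith)
  have hV2 : (c - 2 - M * x) ^ 2 + M * x * (1 - x) ≤ K :=
    (sq_sub_mul_add_mul_one_sub_le hM ⟨hx0, hx1⟩ (by linarith) (by linarith)).trans (by linarith)
  have hV3 : (c - (M + 2) * x) ^ 2 + (M + 2) * x * (1 - x) ≤ K :=
    sq_sub_mul_add_mul_one_sub_le (by positivity) ⟨hx0, hx1⟩ (by linarith) (by linarith)
  have h1x : 0 ≤ 1 - x := by linarith
  have h1α : 0 ≤ 1 - α := by linarith [hα.2]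
  have hα0 := hα.1
  calc (1 - α) * ((1 - x) * ((c - M * x) ^ 2 + M * x * (1 - x))
          + x * ((c - 2 - M * x) ^ 2 + M * x * (1 - x)))
        + α * ((c - (M + 2) * x) ^ 2 + (M + 2) * x * (1 - x))
      ≤ (1 - α) * ((1 - x) * K + x * K) + α * K := by gcongr
    _ = K := by ring
    _ ≤ 25 * (M + 2 + 1) := by rw [hK]; linarith

lemma sum_bp_add_bp_sub_one (hn : 2 ≤ n) :
    ∑ k ∈ range (n + 1), (bp α (n - 1) k x + bp α (n - 1) ((k:ℤ) - 1) x) = 2 := by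
  obtain ⟨m, rfl⟩ : ∃ m, n = m + 1 := ⟨n - 1, by omega⟩
  rw [sum_add_distrib, Nat.add_sub_cancel, sum_bp (by omega), sum_bp_sub_one (by omega)]
  norm_num

lemma sum_bp_add_bp_sub_one_mul_sq_le (hα : α ∈ Set.Icc (0:ℝ) 1) (hx : x ∈ Set.Icc (0:ℝ) 1)
    (hn : 2 ≤ n) :
    ∑ k ∈ range (n + 1), (bp α (n - 1) k x + bp α (n - 1) ((k:ℤ) - 1) x) * (n * x - k) ^ 2
      ≤ 50 * n := by
  obtain ⟨m, rfl⟩ : ∃ m, n = m + 1 := ⟨n - 1, by omega⟩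
  have hm : 1 ≤ m := by omega
  have hshift : ∑ k ∈ range (m + 2), bp α m k x * (((m + 1 : ℕ) : ℝ) * x - ((k + 1 : ℕ) : ℝ)) ^ 2
      = ∑ k ∈ range (m + 2), bp α m k x * (((m + 1) * x - 1) - k) ^ 2 :=
    sum_congr rfl fun k _ => by push_cast; ring
  have hfirst := sum_bp_mul_sq_le hα hx hm (c := (m + 1) * x)
    (abs_le.mpr ⟨by linarith [hx.1], by linarith [hx.2]⟩)
  have hsecond := sum_bp_mul_sq_le hα hx hm (c := (m + 1) * x - 1)
    (abs_le.mpr ⟨by linarith [hx.1], by linarith [hx.2]⟩)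
  rw [Nat.add_sub_cancel, show m + 1 + 1 = m + 2 from rfl]
  simp only [add_mul, sum_add_distrib]
  rw [sum_bp_sub_one_mul hm, hshift]
  push_cast at hfirst ⊢
  linarith

end Bernstein

noncomputable def J1Weight (α : ℝ) (a0 a1 : ℕ → ℝ) (n : ℕ) (x : ℝ) (k : ℕ) : ℝ :=
  (a1 n * x + a0 n) * bp α (n - 1) (k : ℤ) x + (a1 n * (1 - x) + a0 n) * bp α (n - 1) ((k : ℤ) - 1) x

section Weights

variable {α x : ℝ} {a0 a1 : ℕ → ℝ} {n : ℕ}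

lemma sum_J1Weight (hn : 2 ≤ n) (hsum : 2 * a0 n + a1 n = 1) :
    ∑ k ∈ range (n + 1), J1Weight α a0 a1 n x k = 1 := by
  obtain ⟨m, rfl⟩ : ∃ m, n = m + 1 := ⟨n - 1, by omega⟩
  simp only [J1Weight, sum_add_distrib, ← mul_sum, Nat.add_sub_cancel]
  rw [sum_bp (by omega), sum_bp_sub_one (by omega)]
  linarith

lemma J1_sub_eq {ρ : ℝ} (hρ : 0 < ρ) (hn : 2 ≤ n) (hsum : 2 * a0 n + a1 n = 1) {f : ℝ → ℝ}
    (hf : ContinuousOn f (Set.Icc 0 1)) :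
    J1 α ρ a0 a1 n f x - f x
      = ∑ k ∈ range (n + 1), J1Weight α a0 a1 n x k * ∫ t in (0:ℝ)..1, pal ρ n k t * (f t - f x) := by
  have hint : ∀ k ∈ range (n + 1), ∫ t in (0:ℝ)..1, pal ρ n k t * (f t - f x)
      = (∫ t in (0:ℝ)..1, pal ρ n k t * f t) - f x := by
    intro k hk
    have hk : k ≤ n := Nat.lt_succ_iff.mp (mem_range.mp hk)
    simp only [mul_sub]
    rw [intervalIntegral.integral_sub (intervalIntegrable_pal_mul hρ hk hf)
        ((intervalIntegrable_pal hρ hk).mul_const _),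
      intervalIntegral.integral_mul_const, integral_pal hρ hk, one_mul]
  rw [sum_congr rfl fun k hk => by rw [hint k hk], sum_congr rfl fun _ _ => mul_sub _ _ _,
    sum_sub_distrib, ← sum_mul, sum_J1Weight hn hsum, one_mul]
  rfl

lemma abs_J1Weight_le (hα : α ∈ Set.Icc (0:ℝ) 1) (hx : x ∈ Set.Icc (0:ℝ) 1)
    (hsum : 2 * a0 n + a1 n = 1) (k : ℕ) :
    |J1Weight α a0 a1 n x k|
      ≤ (1 + 3 * |a0 n|) * (bp α (n - 1) k x + bp α (n - 1) ((k:ℤ) - 1) x) := by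
  have haff : ∀ y ∈ Set.Icc (0:ℝ) 1, |a1 n * y + a0 n| ≤ 1 + 3 * |a0 n| := by
    rintro y ⟨hy0, hy1⟩
    rw [show a1 n = 1 - 2 * a0 n by linarith, abs_le]
    constructor <;> nlinarith [neg_abs_le (a0 n), le_abs_self (a0 n)]
  have hp := bp_nonneg hα hx (n - 1) k
  have hq := bp_nonneg hα hx (n - 1) (k - 1)
  calc |J1Weight α a0 a1 n x k|
      ≤ |a1 n * x + a0 n| * bp α (n - 1) k x
        + |a1 n * (1 - x) + a0 n| * bp α (n - 1) ((k:ℤ) - 1) x := by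
        refine (abs_add_le _ _).trans_eq ?_
        rw [abs_mul, abs_mul, abs_of_nonneg hp, abs_of_nonneg hq]
    _ ≤ (1 + 3 * |a0 n|) * bp α (n - 1) k x + (1 + 3 * |a0 n|) * bp α (n - 1) ((k:ℤ) - 1) x := by
        gcongr
        · exact haff x hx
        · exact haff (1 - x) ⟨by linarith [hx.2], by linarith [hx.1]⟩
    _ = _ := by ring

end Weights

theorem stmt_10_general (α ρ : ℝ) (hα : α ∈ Set.Icc (0:ℝ) 1) (hρ : 0 < ρ)
    (a0 a1 : ℕ → ℝ) (hsum : ∀ n, 2 * a0 n + a1 n = 1) :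
    ∃ C3 > (0:ℝ), ∀ τ : ℝ, 0 < τ → τ ≤ 1 → ∀ L : ℝ, 0 < L → ∀ f : ℝ → ℝ,
      (∀ x1 ∈ Set.Icc (0:ℝ) 1, ∀ x2 ∈ Set.Icc (0:ℝ) 1,
        |f x1 - f x2| ≤ L * |x1 - x2| ^ τ) →
      ∀ n : ℕ, 2 ≤ n → ∀ x ∈ Set.Icc (0:ℝ) 1,
        |J1 α ρ a0 a1 n f x - f x|
          ≤ L * C3 * (1 + 3 * |a0 n|) * (n : ℝ) ^ (-(τ / 2)) := by
  refine ⟨102 + 2 * (2 / ρ ^ 2 + 1 / ρ), by positivity, fun τ hτ hτ1 L hL f hf n hn x hx => ?_⟩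
  have hN : (0:ℝ) < n := by positivity
  rw [J1_sub_eq hρ hn (hsum n) (continuousOn_of_abs_sub_le_rpow hτ hf)]
  calc _ ≤ (1 + 3 * |a0 n|) * (L * (n : ℝ) ^ (-(τ / 2))) * ((1 + (2 / ρ ^ 2 + 1 / ρ))
          * ∑ k ∈ range (n + 1), (bp α (n - 1) k x + bp α (n - 1) ((k:ℤ) - 1) x)
        + ∑ k ∈ range (n + 1),
          (bp α (n - 1) k x + bp α (n - 1) ((k:ℤ) - 1) x) * (2 / n * (n * x - k) ^ 2)) :=
        abs_sum_mul_le (fun k _ => abs_J1Weight_le hα hx (hsum n) k) fun k hk =>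
          abs_integral_pal_mul_sub_le hρ (Nat.lt_succ_iff.mp (mem_range.mp hk)) (by omega)
            hL.le hτ hτ1 hf hx
    _ ≤ (1 + 3 * |a0 n|) * (L * (n : ℝ) ^ (-(τ / 2))) * ((1 + (2 / ρ ^ 2 + 1 / ρ)) * 2
        + 2 / n * (50 * n)) := by
        simp only [mul_left_comm _ (2 / (n:ℝ)), ← mul_sum]
        rw [sum_bp_add_bp_sub_one hn]
        gcongr
        exact sum_bp_add_bp_sub_one_mul_sq_le hα hx hn
    _ = _ := by
        field_simp
        ring

theorem stmt_10 (α ρ : ℝ) (hα : α ∈ Set.Icc (0:ℝ) 1) (hρ : 0 < ρ)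
    (a0 a1 : ℕ → ℝ) (hsum : ∀ n, 2 * a0 n + a1 n = 1)
    (hbdd : ∃ M : ℝ, ∀ n, |a0 n| ≤ M) :
    ∃ C3 > (0:ℝ), ∀ τ : ℝ, 0 < τ → τ ≤ 1 → ∀ L : ℝ, 0 < L → ∀ f : ℝ → ℝ,
      (∀ x1 ∈ Set.Icc (0:ℝ) 1, ∀ x2 ∈ Set.Icc (0:ℝ) 1,
        |f x1 - f x2| ≤ L * |x1 - x2| ^ τ) →
      ∀ n : ℕ, 2 ≤ n → ∀ x ∈ Set.Icc (0:ℝ) 1,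
        |J1 α ρ a0 a1 n f x - f x|
          ≤ L * C3 * (1 + 3 * |a0 n|) * (n : ℝ) ^ (-(τ / 2)) :=
  stmt_10_general α ρ hα hρ a0 a1 hsum
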